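/- arXiv:2102.10542 — 3 statements merged into one kernel-verified Lean document; each statement's English description precedes it below -/
import Mathlib

section
/- Let φ : ℝ → ℂ be a smooth function with compact support. Then lim_{N→∞} ∑_{n=−N}^{N} ∫_{−∞}^{∞} e^{inx}·φ(x) dx = 2π·∑_{m∈ℤ} φ(2πm). In particular the limit on the left exists, and the sum on the right is a finite sum since φ has compact support. -/
set_option maxHeartbeats 1000000


open Real Filter

section Aux

open MeasureTheory Complex FourierTransform Asymptotics

/-- Decay of the Fourier transform of a smooth compactly supported function. -/
lemma fourier_decay_aux (f : ℝ → ℂ) (hf : ContDiff ℝ (⊤ : ℕ∞) f) (hsupp : HasCompactSupport f) :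
    (𝓕 f) =O[cocompact ℝ] (fun x : ℝ => |x| ^ (-2 : ℝ)) := by
  have hdiff : Differentiable ℝ f := hf.differentiable (by simp)
  have hf' : ContDiff ℝ (⊤ : ℕ∞) (deriv f) := (contDiff_infty_iff_deriv.mp hf).2
  have hdiff' : Differentiable ℝ (deriv f) := hf'.differentiable (by simp)
  have hf'' : ContDiff ℝ (⊤ : ℕ∞) (deriv (deriv f)) := (contDiff_infty_iff_deriv.mp hf').2
  have hs' : HasCompactSupport (deriv f) := hsupp.deriv
  have hs'' : HasCompactSupport (deriv (deriv f)) := hs'.deriv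
  have hi : Integrable f := hf.continuous.integrable_of_hasCompactSupport hsupp
  have hi' : Integrable (deriv f) := hf'.continuous.integrable_of_hasCompactSupport hs'
  have hi'' : Integrable (deriv (deriv f)) := hf''.continuous.integrable_of_hasCompactSupport hs''
  have h1 := Real.fourier_deriv hi hdiff hi'
  have h2 := Real.fourier_deriv hi' hdiff' hi''
  set C := ∫ y : ℝ, ‖deriv (deriv f) y‖ with hC
  have hbound : ∀ x : ℝ, (2 * π * |x|) ^ 2 * ‖𝓕 f x‖ ≤ C := by
    intro x
    have hb : ‖𝓕 (deriv (deriv f)) x‖ ≤ ∫ y : ℝ, ‖deriv (deriv f) y‖ :=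
      VectorFourier.norm_fourierIntegral_le_integral_norm _ _ _ _ _
    rw [h2, h1] at hb
    have : ‖(2 * ↑π * I * ↑x : ℂ) • (2 * ↑π * I * ↑x : ℂ) • 𝓕 f x‖
        = (2 * π * |x|) ^ 2 * ‖𝓕 f x‖ := by
      rw [norm_smul, norm_smul]
      have : ‖(2 * ↑π * I * ↑x : ℂ)‖ = 2 * π * |x| := by
        simp [norm_mul, abs_of_pos pi_pos, Complex.norm_real]
      rw [this]; ring
    rw [this] at hb
    exact hb
  have hCnn : 0 ≤ C := integral_nonneg (fun y => norm_nonneg _)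
  apply IsBigO.of_bound (C / (2 * π) ^ 2)
  have hev : ∀ᶠ x : ℝ in cocompact ℝ, 1 ≤ ‖x‖ :=
    tendsto_norm_cocompact_atTop.eventually_ge_atTop 1
  filter_upwards [hev] with x hx
  have hx1 : (1 : ℝ) ≤ |x| := by simpa using hx
  have hrpow : |x| ^ (-2 : ℝ) = (|x| ^ 2)⁻¹ := by
    rw [show (-2 : ℝ) = -((2 : ℕ) : ℝ) by norm_num, Real.rpow_neg (abs_nonneg x),
      Real.rpow_natCast]
  have hrnn : (0 : ℝ) ≤ |x| ^ (-2 : ℝ) := Real.rpow_nonneg (abs_nonneg x) _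
  rw [Real.norm_eq_abs (|x| ^ (-2:ℝ)), _root_.abs_of_nonneg hrnn, hrpow]
  have hxpos : (0:ℝ) < |x| := lt_of_lt_of_le one_pos hx1
  rw [show C / (2 * π) ^ 2 * (|x| ^ 2)⁻¹ = C / ((2 * π * |x|) ^ 2) by
    rw [← div_eq_mul_inv, div_div, ← mul_pow]]
  rw [le_div_iff₀ (by positivity)]
  calc ‖𝓕 f x‖ * (2 * π * |x|) ^ 2 = (2 * π * |x|) ^ 2 * ‖𝓕 f x‖ := by ring
    _ ≤ C := hbound x

end Aux

/-- Distributional identity `∑_{n ∈ ℤ} e^{i n x} = 2π ∑_{m ∈ ℤ} δ(x - 2πm)`: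
for every smooth compactly supported `φ : ℝ → ℂ`,
`lim_{N → ∞} ∑_{n = -N}^{N} ∫ e^{i n x} φ(x) dx = 2π ∑_{m ∈ ℤ} φ(2πm)`. -/
theorem dirac_comb_identity (φ : ℝ → ℂ)
    (hφ : ContDiff ℝ (⊤ : ℕ∞) φ) (hsupp : HasCompactSupport φ) :
    Tendsto (fun N : ℕ => ∑ n ∈ Finset.Icc (-(N : ℤ)) (N : ℤ),
        ∫ x : ℝ, Complex.exp (Complex.I * (n : ℂ) * (x : ℂ)) * φ x)
      atTop (nhds (2 * π * ∑' m : ℤ, φ (2 * π * (m : ℝ)))) := by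
  classical
  have hφ' : ContDiff ℝ (⊤ : ℕ∞) φ := hφ.of_le (by simp)
  open MeasureTheory Complex FourierTransform Asymptotics in
  -- the function rescaled so that the lattice is `ℤ`
  set g : ℝ → ℂ := fun x => φ (2 * π * x) with hg
  set F : ℤ → ℂ := fun n => ∫ x : ℝ, Complex.exp (Complex.I * (n : ℂ) * (x : ℂ)) * φ x with hF
  have h2π : (2 * π : ℝ) ≠ 0 := by positivity
  have hgcd : ContDiff ℝ (⊤ : ℕ∞) g := hφ'.comp (contDiff_const.mul contDiff_id)
  have hgsupp : HasCompactSupport g := by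
    have : g = φ ∘ (Homeomorph.mulLeft₀ (2 * π : ℝ) h2π) := rfl
    rw [this]
    exact hsupp.comp_homeomorph _
  -- decay hypotheses for Poisson summation
  have hgdecay : g =O[cocompact ℝ] (fun x : ℝ => |x| ^ (-2 : ℝ)) := by
    apply Asymptotics.IsBigO.of_bound 0
    filter_upwards [hgsupp.compl_mem_cocompact] with x hx
    rw [image_eq_zero_of_notMem_tsupport hx]
    simp

  have hFgdecay : (𝓕 g) =O[cocompact ℝ] (fun x : ℝ => |x| ^ (-2 : ℝ)) :=
    fourier_decay_aux g hgcd hgsupp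
  -- Poisson summation for `g` at `x = 0`
  have hP := Real.tsum_eq_tsum_fourier_of_rpow_decay hgcd.continuous one_lt_two
    hgdecay hFgdecay 0
  simp only [zero_add, QuotientAddGroup.mk_zero, fourier_eval_zero, mul_one] at hP
  -- key identity: `F n = 2π * 𝓕 g (-n)`
  have hkey : ∀ n : ℤ, 𝓕 g (n : ℝ) = ((2 * π : ℝ) : ℂ)⁻¹ * F (-n) := by
    intro n
    set H : ℝ → ℂ := fun y : ℝ => Complex.exp (Complex.I * ((-n : ℤ) : ℂ) * (y : ℂ)) * φ y
      with hH
    rw [Real.fourier_real_eq_integral_exp_smul]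
    have hint : (fun v : ℝ => Complex.exp (↑(-2 * π * v * (n : ℝ)) * Complex.I) • g v)
        = (fun v : ℝ => H (2 * π * v)) := by
      funext v
      simp only [hH, hg, smul_eq_mul]
      congr 1
      congr 1
      push_cast
      ring
    rw [hint]
    rw [MeasureTheory.Measure.integral_comp_mul_left H (2 * π)]
    rw [abs_of_pos (by positivity : (0:ℝ) < (2*π)⁻¹)]
    rw [real_smul]
    have : F (-n) = ∫ y : ℝ, H y := rfl
    rw [this]
    push_cast
    ring_nf
  have h2πC : ((2 * π : ℝ) : ℂ) ≠ 0 := by exact_mod_cast Complex.ofReal_ne_zero.mpr h2π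
  have hkey' : ∀ n : ℤ, F n = ((2 * π : ℝ) : ℂ) * 𝓕 g ((-n : ℤ) : ℝ) := by
    intro n
    rw [hkey (-n), neg_neg, ← mul_assoc, mul_inv_cancel₀ h2πC, one_mul]
  -- summability
  have hFgsummable : Summable (fun n : ℤ => 𝓕 g (n : ℝ)) :=
    summable_of_isBigO (Real.summable_abs_int_rpow one_lt_two)
      (hFgdecay.comp_tendsto Int.tendsto_coe_cofinite)
  have hFsummable : Summable F := by
    have h1 : Summable (fun n : ℤ => 𝓕 g ((-n : ℤ) : ℝ)) :=
      (Equiv.neg ℤ).summable_iff.mpr hFgsummable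
    have := h1.mul_left ((2 * π : ℝ) : ℂ)
    exact this.congr (fun n => (hkey' n).symm)
  -- tsum identity
  have htsum : ∑' n : ℤ, F n = 2 * π * ∑' m : ℤ, φ (2 * π * (m : ℝ)) := by
    calc ∑' n : ℤ, F n = ∑' n : ℤ, ((2 * π : ℝ) : ℂ) * 𝓕 g ((-n : ℤ) : ℝ) :=
          tsum_congr hkey'
      _ = ((2 * π : ℝ) : ℂ) * ∑' n : ℤ, 𝓕 g ((-n : ℤ) : ℝ) := tsum_mul_left
      _ = ((2 * π : ℝ) : ℂ) * ∑' n : ℤ, 𝓕 g (n : ℝ) := by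
          congr 1
          exact (Equiv.neg ℤ).tsum_eq (fun n : ℤ => 𝓕 g (n : ℝ))
      _ = ((2 * π : ℝ) : ℂ) * ∑' n : ℤ, g (n : ℝ) := by rw [← hP]
      _ = 2 * π * ∑' m : ℤ, φ (2 * π * (m : ℝ)) := by push_cast; rfl
  -- assemble
  have hhs : HasSum F (2 * π * ∑' m : ℤ, φ (2 * π * (m : ℝ))) := by
    rw [← htsum]; exact hFsummable.hasSum
  have hIcc : Tendsto (fun N : ℕ => Finset.Icc (-(N : ℤ)) (N : ℤ)) atTop atTop := by
    apply tendsto_atTop_finset_of_monotone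
    · intro a b hab
      exact Finset.Icc_subset_Icc (by exact_mod_cast neg_le_neg (Int.ofNat_le.mpr hab))
        (by exact_mod_cast hab)
    · intro x
      refine ⟨x.natAbs, ?_⟩
      simp only [Finset.mem_Icc]
      omega
  exact hhs.comp hIcc
end

section
/- Let φ : ℝ → ℂ be a smooth function with compact support whose support is disjoint from the set {2πm : m ∈ ℤ}. Then lim_{N→∞} ∑_{n=−N}^{N} ∫_{−∞}^{∞} e^{inx}·φ(x) dx = 0. That is, the distributional support of Δ₀(x) = ∑_{n∈ℤ} e^{inx} is contained in {2πm : m ∈ ℤ}. -/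
open Real Filter

/-- The distributional support of `Δ₀(x) = ∑_{n ∈ ℤ} e^{i n x}` is contained in
`{2πm : m ∈ ℤ}`: if `φ : ℝ → ℂ` is smooth with compact support disjoint from
`{2πm : m ∈ ℤ}`, then `lim_{N → ∞} ∑_{n = -N}^{N} ∫ e^{i n x} φ(x) dx = 0`. -/
theorem dirac_comb_support (φ : ℝ → ℂ)
    (hφ : ContDiff ℝ (⊤ : ℕ∞) φ) (hsupp : HasCompactSupport φ)
    (hdisj : Disjoint (tsupport φ) {x : ℝ | ∃ m : ℤ, x = 2 * π * (m : ℝ)}) :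
    Tendsto (fun N : ℕ => ∑ n ∈ Finset.Icc (-(N : ℤ)) (N : ℤ),
        ∫ x : ℝ, Complex.exp (Complex.I * (n : ℂ) * (x : ℂ)) * φ x)
      atTop (nhds 0) := by
  -- the divided function ψ
  set g : ℝ → ℂ := fun x => Complex.exp (Complex.I * x) - 1 with hg_def
  set ψ : ℝ → ℂ := fun x => φ x / g x with hψ_def
  have hgcont : Continuous g := by
    apply Continuous.sub _ continuous_const
    exact Complex.continuous_exp.comp (continuous_const.mul Complex.continuous_ofReal)
  -- points where g vanishes are not in the support
  have hden : ∀ x ∈ tsupport φ, g x ≠ 0 := by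
    intro x hx hzero
    have h1 : Complex.exp (Complex.I * x) = 1 := by
      have := sub_eq_zero.mp hzero; exact this
    rw [Complex.exp_eq_one_iff] at h1
    obtain ⟨n, hn⟩ := h1
    have hx2 : Complex.I * (x : ℂ) = Complex.I * (2 * π * n) := by rw [hn]; ring
    have hx2' : (x : ℂ) = 2 * π * (n : ℝ) := by
      have := mul_left_cancel₀ Complex.I_ne_zero hx2
      push_cast
      exact this
    have hx3 : x = 2 * π * (n : ℝ) := by exact_mod_cast hx2'
    exact Set.disjoint_left.mp hdisj hx ⟨n, hx3⟩
  -- φ vanishes off its support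
  have hφ0 : ∀ x, x ∉ tsupport φ → φ x = 0 := fun x hx =>
    image_eq_zero_of_notMem_tsupport hx
  -- ψ is continuous
  have hψcont : Continuous ψ := by
    rw [continuous_iff_continuousAt]
    intro x
    by_cases hx : x ∈ tsupport φ
    · exact (hφ.continuous.continuousAt).div hgcont.continuousAt (hden x hx)
    · have hev : ∀ᶠ y in nhds x, ψ y = 0 := by
        filter_upwards [(isClosed_tsupport φ).isOpen_compl.mem_nhds hx] with y hy
        simp [hψ_def, hφ0 y hy]
      exact ContinuousAt.congr continuousAt_const (by filter_upwards [hev] with y hy using hy.symm)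
  have hψsupp : HasCompactSupport ψ := by
    apply hsupp.mono
    intro x hx
    exact fun h => hx (by simp [hψ_def, h])
  -- key identity
  have key : ∀ x : ℝ, g x * ψ x = φ x := by
    intro x
    by_cases hx : x ∈ tsupport φ
    · rw [hψ_def, mul_comm, div_mul_cancel₀ _ (hden x hx)]
    · simp [hψ_def, hφ0 x hx]
  -- integrability
  have hint : ∀ k : ℤ, MeasureTheory.Integrable
      (fun x : ℝ => Complex.exp (Complex.I * (k : ℂ) * (x : ℂ)) * ψ x) := by
    intro k
    apply Continuous.integrable_of_hasCompactSupport
    · exact (Complex.continuous_exp.comp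
        ((continuous_const.mul Complex.continuous_ofReal))).mul hψcont
    · exact hψsupp.mul_left
  set G : ℤ → ℂ := fun k => ∫ x : ℝ, Complex.exp (Complex.I * (k : ℂ) * (x : ℂ)) * ψ x with hG_def
  -- each summand is a difference
  have hdiff : ∀ n : ℤ, (∫ x : ℝ, Complex.exp (Complex.I * (n : ℂ) * (x : ℂ)) * φ x)
      = G (n + 1) - G n := by
    intro n
    rw [hG_def, ← MeasureTheory.integral_sub (hint (n + 1)) (hint n)]
    apply MeasureTheory.integral_congr_ae
    filter_upwards with x
    have hx : Complex.exp (Complex.I * ((n : ℤ) + 1 : ℤ) * x)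
        = Complex.exp (Complex.I * (n : ℂ) * x) * Complex.exp (Complex.I * x) := by
      rw [← Complex.exp_add]; push_cast; ring_nf
    have hk := key x
    push_cast at hx ⊢
    rw [hx, ← hk]
    have hgx : g x = Complex.exp (Complex.I * x) - 1 := by rw [hg_def]
    rw [hgx]
    ring
  -- telescoping
  have tel : ∀ N : ℕ, ∑ n ∈ Finset.Icc (-(N : ℤ)) (N : ℤ), (G (n + 1) - G n)
      = G ((N : ℤ) + 1) - G (-(N : ℤ)) := by
    intro N
    induction N with
    | zero => simp
    | succ N ih =>
      have hset : Finset.Icc (-((N : ℤ) + 1)) ((N : ℤ) + 1)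
          = insert (-((N : ℤ) + 1)) (insert ((N : ℤ) + 1) (Finset.Icc (-(N : ℤ)) (N : ℤ))) := by
        ext m; simp; omega
      push_cast
      rw [hset, Finset.sum_insert (by simp only [Finset.mem_insert, Finset.mem_Icc]; omega),
        Finset.sum_insert (by simp only [Finset.mem_Icc]; omega), ih]
      have h1 : (-((N : ℤ) + 1) + 1) = -(N : ℤ) := by ring
      rw [h1]; ring
  have heq : (fun N : ℕ => ∑ n ∈ Finset.Icc (-(N : ℤ)) (N : ℤ),
      ∫ x : ℝ, Complex.exp (Complex.I * (n : ℂ) * (x : ℂ)) * φ x)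
      = fun N : ℕ => G ((N : ℤ) + 1) - G (-(N : ℤ)) := by
    funext N
    rw [← tel N]
    exact Finset.sum_congr rfl fun n _ => hdiff n
  rw [heq]
  -- Riemann-Lebesgue
  set F : ℝ → ℂ := fun w => ∫ v : ℝ, Real.fourierChar (-(v * w)) • ψ v with hF_def
  have hRL : Tendsto F (cocompact ℝ) (nhds 0) := Real.tendsto_integral_exp_smul_cocompact ψ
  have hGF : ∀ k : ℤ, G k = F (-(k : ℝ) / (2 * π)) := by
    intro k
    rw [hG_def, hF_def]
    apply MeasureTheory.integral_congr_ae
    filter_upwards with x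
    rw [Circle.smul_def, Real.fourierChar_apply]
    congr 1
    have hπ : (π : ℝ) ≠ 0 := Real.pi_ne_zero
    have harg : 2 * π * -(x * (-(k : ℝ) / (2 * π))) = (k : ℝ) * x := by
      field_simp
    rw [harg]
    push_cast
    ring
  have hpos : (0 : ℝ) < 2 * π := by positivity
  have hco : Tendsto (fun N : ℕ => G ((N : ℤ) + 1)) atTop (nhds 0) := by
    have h1 : Tendsto (fun N : ℕ => -(((N : ℤ) + 1 : ℤ) : ℝ) / (2 * π)) atTop atBot := by
      apply Tendsto.atBot_div_const hpos
      push_cast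
      exact tendsto_neg_atBot_iff.mpr (tendsto_atTop_add_const_right _ 1 tendsto_natCast_atTop_atTop)
    have h2 : Tendsto (fun N : ℕ => -(((N : ℤ) + 1 : ℤ) : ℝ) / (2 * π)) atTop (cocompact ℝ) := by
      rw [cocompact_eq_atBot_atTop]
      exact h1.mono_right le_sup_left
    exact (hRL.comp h2).congr fun N => (hGF ((N : ℤ) + 1)).symm
  have hco2 : Tendsto (fun N : ℕ => G (-(N : ℤ))) atTop (nhds 0) := by
    have h1 : Tendsto (fun N : ℕ => -((-(N : ℤ) : ℤ) : ℝ) / (2 * π)) atTop atTop := by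
      apply Tendsto.atTop_div_const hpos
      push_cast
      simpa using tendsto_natCast_atTop_atTop (R := ℝ)
    have h2 : Tendsto (fun N : ℕ => -((-(N : ℤ) : ℤ) : ℝ) / (2 * π)) atTop (cocompact ℝ) := by
      rw [cocompact_eq_atBot_atTop]
      exact h1.mono_right le_sup_right
    exact (hRL.comp h2).congr fun N => (hGF (-(N : ℤ))).symm
  simpa using hco.sub hco2
end

section
/- For every real number x, the absolutely convergent series ∑_{n=1}^∞ cos(nx)/n² satisfies πx(⌊x/(2π)⌋ + ⌈x/(2π)⌉) − 2π²·⌈x/(2π)⌉·⌊x/(2π)⌋ − π²/3 = −2·∑_{n=1}^∞ cos(nx)/n² + x²/2. -/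
/-!
The series is the Fourier series of the periodized Bernoulli polynomial `B₂`: for `y ∈ [0, 1]`,
`∑ cos (2π n y) / n² = π² B₂(y)`, so `∑ cos (n x) / n² = π² B₂({x / 2π})`. What remains is the
identity `(r - ⌊r⌋) (⌈r⌉ - r) = {r} (1 - {r})`, which holds both when `r` is an integer (both
sides vanish) and when `⌈r⌉ = ⌊r⌋ + 1`.
-/

open Real

theorem hasSum_cos_two_pi_mul_div_sq {y : ℝ} (hy : y ∈ Set.Icc (0 : ℝ) 1) :
    HasSum (fun n : ℕ => Real.cos (2 * π * n * y) / (n : ℝ) ^ 2)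
      (π ^ 2 * bernoulliFun 2 y) := by
  convert hasSum_one_div_nat_pow_mul_cos one_ne_zero hy using 1
  · ext n
    rw [mul_one, one_div_mul_eq_div]
  · rw [bernoulliFun]
    congr 1
    norm_num [Nat.factorial]
    ring

theorem hasSum_cos_mul_div_sq (x : ℝ) :
    HasSum (fun n : ℕ => Real.cos (n * x) / (n : ℝ) ^ 2)
      (π ^ 2 * bernoulliFun 2 (Int.fract (x / (2 * π)))) := by
  set r := x / (2 * π)
  have hx : x = 2 * π * (Int.fract r + ⌊r⌋) := by
    rw [Int.fract_add_floor, mul_div_cancel₀ x (by positivity)]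
  convert hasSum_cos_two_pi_mul_div_sq ⟨Int.fract_nonneg r, (Int.fract_lt_one r).le⟩ using 2
    with n
  rw [hx, show (n : ℝ) * (2 * π * (Int.fract r + ⌊r⌋))
      = 2 * π * n * Int.fract r + ((n * ⌊r⌋ : ℤ) : ℝ) * (2 * π) by push_cast; ring,
    Real.cos_add_int_mul_two_pi]

theorem hasSum_cos_succ_mul_div_sq (x : ℝ) :
    HasSum (fun n : ℕ => Real.cos ((n + 1) * x) / ((n : ℝ) + 1) ^ 2)
      (π ^ 2 * bernoulliFun 2 (Int.fract (x / (2 * π)))) := by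
  simpa using (hasSum_nat_add_iff' 1).mpr (hasSum_cos_mul_div_sq x)

theorem Int.fract_mul_ceil_sub_self {α : Type*} [Ring α] [LinearOrder α] [IsStrictOrderedRing α]
    [FloorRing α] (r : α) : Int.fract r * (⌈r⌉ - r) = Int.fract r * (1 - Int.fract r) := by
  rcases Int.fract_eq_zero_or_add_one_sub_ceil r with h | h
  · simp [h]
  · rw [h]
    congr 1
    abel

/-- Closed form of the second symmetric antiderivative `Δ₂` on all of `ℝ`:
for every real `x`,
`π x (⌊x/(2π)⌋ + ⌈x/(2π)⌉) - 2π² ⌈x/(2π)⌉ ⌊x/(2π)⌋ - π²/3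
  = -2 ∑_{n=1}^∞ cos (n x) / n² + x² / 2`. -/
theorem delta_two_closed_form (x : ℝ) :
    π * x * ((⌊x / (2 * π)⌋ : ℝ) + (⌈x / (2 * π)⌉ : ℝ))
        - 2 * π ^ 2 * ((⌈x / (2 * π)⌉ : ℝ) * (⌊x / (2 * π)⌋ : ℝ)) - π ^ 2 / 3
      = -2 * ∑' n : ℕ, Real.cos (((n : ℝ) + 1) * x) / ((n : ℝ) + 1) ^ 2
        + x ^ 2 / 2 := by
  rw [(hasSum_cos_succ_mul_div_sq x).tsum_eq, bernoulliFun_two]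
  obtain ⟨r, rfl⟩ : ∃ r, x = 2 * π * r :=
    ⟨x / (2 * π), (mul_div_cancel₀ x (by positivity)).symm⟩
  rw [mul_div_cancel_left₀ r (by positivity)]
  have key := Int.fract_mul_ceil_sub_self r
  rw [Int.fract] at key ⊢
  linear_combination (2 * π ^ 2) * key
end
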